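/- Consider the 2×2 transfer matrix G(s) with entries g₁₁ = γ₁ k₁/(1+τ₁ s), g₂₂ = γ₂ k₂/(1+τ₂ s), g₁₂ = (1−γ₂)k₁/((1+τ₃ s)(1+τ₁ s)), g₂₁ = (1−γ₁)k₂/((1+τ₄ s)(1+τ₂ s)), with all τᵢ, kᵢ > 0 and γ₁, γ₂ ∈ (0,1). Then det G(s) has a zero in the open right half plane if and only if γ₁ + γ₂ < 1, i.e., the determinant numerator (1+τ₃ s)(1+τ₄ s) γ₁γ₂ − (1−γ₁)(1−γ₂) has a positive real root exactly when γ₁+γ₂ < 1. -/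

import Mathlib

/-!
For `s > 0` both factors `1 + τ s` exceed `1`, so `p(s) > p(0) = γ₁γ₂ − (1−γ₁)(1−γ₂) = γ₁ + γ₂ − 1`
and a positive root forces `p(0) < 0`. Conversely, if `p(0) < 0`, then `p(s) → ∞` as `s → ∞` and the
intermediate value theorem gives a positive root.
-/

open Filter Set

lemma tendsto_mul_one_add_mul_mul_one_add_mul_atTop {a c d : ℝ} (ha : 0 < a) (hc : 0 < c)
    (hd : 0 < d) : Tendsto (fun s ↦ a * (1 + c * s) * (1 + d * s)) atTop atTop := by
  have h_lin {e : ℝ} (he : 0 < e) : Tendsto (fun s : ℝ ↦ 1 + e * s) atTop atTop :=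
    tendsto_atTop_add_const_left _ _ (tendsto_id.const_mul_atTop he)
  exact ((h_lin hc).const_mul_atTop ha).atTop_mul_atTop₀ (h_lin hd)

lemma exists_pos_root_mul_one_add_mul_mul_one_add_mul_sub_iff {a b c d : ℝ} (ha : 0 < a)
    (hc : 0 < c) (hd : 0 < d) :
    (∃ s : ℝ, 0 < s ∧ a * (1 + c * s) * (1 + d * s) - b = 0) ↔ a < b := by
  constructor
  · rintro ⟨s, hs, hroot⟩
    have h_gt_one : 1 < (1 + c * s) * (1 + d * s) := by nlinarith [mul_pos hc hs, mul_pos hd hs]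
    nlinarith
  · intro hab
    set p : ℝ → ℝ := fun s ↦ a * (1 + c * s) * (1 + d * s) - b
    have hp_cont : ContinuousOn p (Ici 0) := by fun_prop
    have hp_top : Tendsto p atTop atTop :=
      tendsto_atTop_add_const_right _ _ (tendsto_mul_one_add_mul_mul_one_add_mul_atTop ha hc hd)
    have hp_zero : p 0 < 0 := by simp [p, hab]
    exact intermediate_value_Ioi hp_cont hp_top hp_zero

/-- The determinant numerator `p(s) = γ₁γ₂(1+τ₃ s)(1+τ₄ s) − (1−γ₁)(1−γ₂)` of the
quadruple-tank transfer matrix has a positive real root iff `γ₁ + γ₂ < 1`. -/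
theorem stmt_5 (γ₁ γ₂ τ₃ τ₄ : ℝ) (hγ₁ : γ₁ ∈ Set.Ioo (0 : ℝ) 1)
    (hγ₂ : γ₂ ∈ Set.Ioo (0 : ℝ) 1) (hτ₃ : 0 < τ₃) (hτ₄ : 0 < τ₄) :
    (∃ s : ℝ, 0 < s ∧
        γ₁ * γ₂ * (1 + τ₃ * s) * (1 + τ₄ * s) - (1 - γ₁) * (1 - γ₂) = 0) ↔
      γ₁ + γ₂ < 1 := by
  rw [exists_pos_root_mul_one_add_mul_mul_one_add_mul_sub_iff (mul_pos hγ₁.1 hγ₂.1) hτ₃ hτ₄,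
    show (1 - γ₁) * (1 - γ₂) = γ₁ * γ₂ + (1 - (γ₁ + γ₂)) by ring, lt_add_iff_pos_right, sub_pos]
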